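/- For the Chebyshev polynomials T_j of the first kind and α > 0, define T̂^α_{L,j}(x) = (1/Γ(α)) ∫_{-1}^x (x−s)^{α−1} T_j(s) ds. Then for all j ≥ 2, T̂^α_{L,j+1}(x) = (2(j+1)x/(j+1+α)) T̂^α_{L,j}(x) − ((j+1)(j−1−α)/((j+1+α)(j−1))) T̂^α_{L,j−1}(x) + 2(−1)^j α (x+1)^α / (Γ(α+1)(j+1+α)(j−1)). -/

import Mathlib

/-!
Write `I^α` for the Riemann–Liouville integral from `-1`. Since `s = x - (x - s)`, multiplication
by `s` acts as `I^α[s f] = x I^α f - α I^(α+1) f`, so the three-term recurrence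
`T_{j+1} = 2 s T_j - T_{j-1}` gives `I^α T_{j+1} = 2x I^α T_j - 2α I^(α+1) T_j - I^α T_{j-1}`.
The unwanted term `I^(α+1) T_j` is removed by integrating by parts,
`I^(α+1) φ' = I^α φ - φ(-1) (x+1)^α / Γ(α+1)`, with `φ = (j-1) T_{j+1} - (j+1) T_{j-1}`,
whose derivative is `2 (j+1)(j-1) T_j` by `T'_{n+1} = (n+1) U_n` and `2 T_j = U_j - U_{j-2}`;
here `φ(-1) = 2 (-1)^j`. Solving the resulting linear relation for `I^α T_{j+1}` gives the claim.
-/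

open MeasureTheory intervalIntegral

/-- The Chebyshev polynomials of the first kind via the three-term recurrence. -/
noncomputable def chebT : ℕ → ℝ → ℝ
  | 0 => fun _ => 1
  | 1 => fun x => x
  | (j + 2) => fun x => 2 * x * chebT (j + 1) x - chebT j x

open Polynomial Set

namespace Polynomial.Chebyshev

theorem mul_derivative_T_add_one_sub_mul_derivative_T_sub_one (R : Type*) [CommRing R] (n : ℤ) :
    (n - 1 : R[X]) * derivative (T R (n + 1)) - (n + 1 : R[X]) * derivative (T R (n - 1))
      = 2 * (n + 1) * (n - 1) * T R n := by
  have h := two_mul_T_eq_U_sub_U R (n - 2)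
  rw [sub_add_cancel] at h
  rw [T_derivative_eq_U, T_derivative_eq_U, add_sub_cancel_right, sub_sub, one_add_one_eq_two]
  push_cast
  linear_combination -((n + 1 : R[X]) * (n - 1)) * h

end Polynomial.Chebyshev

lemma chebT_eq_eval (n : ℕ) : chebT n = fun x => (Chebyshev.T ℝ n).eval x := by
  induction n using Nat.twoStepInduction with
  | zero => funext x; simp [chebT]
  | one => funext x; simp [chebT]
  | more n ih₀ ih₁ =>
    funext x
    rw [chebT, ih₀, ih₁]
    push_cast
    simp [Chebyshev.T_add_two]

@[fun_prop]
lemma continuous_chebT (n : ℕ) : Continuous (chebT n) := by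
  rw [chebT_eq_eval]
  exact Polynomial.continuous _

lemma chebT_neg_one (n : ℕ) : chebT n (-1) = (-1) ^ n := by
  simp [chebT_eq_eval]

lemma hasDerivAt_chebT (n : ℕ) (s : ℝ) :
    HasDerivAt (chebT n) ((derivative (Chebyshev.T ℝ n)).eval s) s := by
  rw [chebT_eq_eval]
  exact Polynomial.hasDerivAt _ s

lemma hasDerivAt_mul_chebT_add_two_sub_mul_chebT (n : ℕ) (s : ℝ) :
    HasDerivAt (fun s => n * chebT (n + 2) s - (n + 2) * chebT n s)
      (2 * (n + 2) * n * chebT (n + 1) s) s := by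
  have h := congrArg (eval s)
    (Chebyshev.mul_derivative_T_add_one_sub_mul_derivative_T_sub_one ℝ (n + 1))
  simp only [eval_sub, eval_mul, eval_add, eval_one, eval_ofNat, eval_intCast] at h
  refine (((hasDerivAt_chebT (n + 2) s).const_mul _).sub
    ((hasDerivAt_chebT n s).const_mul _)).congr_deriv ?_
  rw [chebT_eq_eval]
  push_cast at h ⊢
  ring_nf at h ⊢
  linear_combination h

/-- The paper's `T̂^α_{L,j}` is `leftFracIntegral (-1) α (chebT j)`. -/
noncomputable def leftFracIntegral (a α : ℝ) (f : ℝ → ℝ) (x : ℝ) : ℝ :=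
  1 / Real.Gamma α * ∫ s in a..x, (x - s) ^ (α - 1) * f s

section FracIntegral

variable {a x : ℝ} {f g : ℝ → ℝ}

lemma intervalIntegrable_sub_rpow_mul {β : ℝ} (hβ : -1 < β) (hf : ContinuousOn f (uIcc a x)) :
    IntervalIntegrable (fun s => (x - s) ^ β * f s) volume a x := by
  have h : IntervalIntegrable (fun s => (x - s) ^ β) volume a x := by
    simpa using (intervalIntegrable_rpow' hβ (a := x - a) (b := x - x)).comp_sub_left x
  exact h.mul_continuousOn hf

lemma leftFracIntegral_sub {α : ℝ} (hα : 0 < α) (hf : ContinuousOn f (uIcc a x))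
    (hg : ContinuousOn g (uIcc a x)) :
    leftFracIntegral a α (fun s => f s - g s) x
      = leftFracIntegral a α f x - leftFracIntegral a α g x := by
  have hβ : -1 < α - 1 := by linarith
  simp only [leftFracIntegral, mul_sub]
  rw [integral_sub (intervalIntegrable_sub_rpow_mul hβ hf) (intervalIntegrable_sub_rpow_mul hβ hg),
    mul_sub]

lemma leftFracIntegral_const_mul (α c : ℝ) :
    leftFracIntegral a α (fun s => c * f s) x = c * leftFracIntegral a α f x := by
  simp only [leftFracIntegral, mul_left_comm _ c, intervalIntegral.integral_const_mul]

lemma leftFracIntegral_id_mul {α : ℝ} (hα : 0 < α) (hax : a ≤ x) (hf : ContinuousOn f (uIcc a x)) :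
    leftFracIntegral a α (fun s => s * f s) x
      = x * leftFracIntegral a α f x - α * leftFracIntegral a (α + 1) f x := by
  have hpow : ∀ s ∈ uIcc a x, (x - s) ^ (α - 1) * (s * f s)
      = x * ((x - s) ^ (α - 1) * f s) - (x - s) ^ α * f s := by
    intro s hs
    have hxs : 0 ≤ x - s := by rw [uIcc_of_le hax] at hs; linarith [hs.2]
    have := Real.rpow_add_one' hxs (y := α - 1) (by linarith)
    rw [sub_add_cancel] at this
    rw [this]; ring
  have hΓ : Real.Gamma (α + 1) = α * Real.Gamma α := Real.Gamma_add_one hα.ne'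
  have hΓ0 : Real.Gamma α ≠ 0 := (Real.Gamma_pos_of_pos hα).ne'
  simp only [leftFracIntegral, add_sub_cancel_right, integral_congr hpow]
  rw [integral_sub ((intervalIntegrable_sub_rpow_mul (by linarith) hf).const_mul x)
    (intervalIntegrable_sub_rpow_mul (by linarith) hf), intervalIntegral.integral_const_mul, hΓ]
  field_simp

lemma leftFracIntegral_add_one_of_hasDerivAt {α : ℝ} (hα : 0 < α) (hax : a ≤ x) {f' : ℝ → ℝ}
    (hf : ∀ s ∈ Icc a x, HasDerivAt f (f' s) s) (hf' : ContinuousOn f' (Icc a x)) :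
    leftFracIntegral a (α + 1) f' x
      = leftFracIntegral a α f x - f a * (x - a) ^ α / Real.Gamma (α + 1) := by
  have hfc : ContinuousOn f (Icc a x) := fun s hs => (hf s hs).continuousAt.continuousWithinAt
  have hcont : ContinuousOn (fun s => (x - s) ^ α * f s) (Icc a x) :=
    ((continuous_const.sub continuous_id).continuousOn.rpow_const fun _ _ => Or.inr hα.le).mul hfc
  rw [← uIcc_of_le hax] at hfc hf'
  have hderiv : ∀ s ∈ Ioo a x, HasDerivAt (fun s => (x - s) ^ α * f s)
      (-α * ((x - s) ^ (α - 1) * f s) + (x - s) ^ α * f' s) s := by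
    intro s hs
    have hxs : x - s ≠ 0 := by linarith [hs.2]
    have h := (((hasDerivAt_id' s).const_sub x).rpow_const (p := α) (Or.inl hxs)).fun_mul
      (hf s (Ioo_subset_Icc_self hs))
    exact h.congr_deriv (by ring)
  have hint : IntervalIntegrable (fun s => -α * ((x - s) ^ (α - 1) * f s) + (x - s) ^ α * f' s)
      volume a x :=
    ((intervalIntegrable_sub_rpow_mul (by linarith) hfc).const_mul _).add
      (intervalIntegrable_sub_rpow_mul (by linarith) hf')
  have hftc := integral_eq_sub_of_hasDerivAt_of_le hax hcont hderiv hint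
  rw [integral_add ((intervalIntegrable_sub_rpow_mul (by linarith) hfc).const_mul _)
      (intervalIntegrable_sub_rpow_mul (by linarith) hf'), intervalIntegral.integral_const_mul,
    sub_self, Real.zero_rpow hα.ne', zero_mul, zero_sub] at hftc
  have hΓ : Real.Gamma (α + 1) = α * Real.Gamma α := Real.Gamma_add_one hα.ne'
  have hΓ0 : Real.Gamma α ≠ 0 := (Real.Gamma_pos_of_pos hα).ne'
  simp only [leftFracIntegral, add_sub_cancel_right, hΓ]
  field_simp
  linear_combination hftc

end FracIntegral

section ChebyshevFracIntegral

variable {a x α : ℝ}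

lemma leftFracIntegral_chebT_add_two (hα : 0 < α) (hax : a ≤ x) (n : ℕ) :
    leftFracIntegral a α (chebT (n + 2)) x
      = 2 * x * leftFracIntegral a α (chebT (n + 1)) x
        - 2 * α * leftFracIntegral a (α + 1) (chebT (n + 1)) x
        - leftFracIntegral a α (chebT n) x := by
  have hrec : chebT (n + 2) = fun s => 2 * (s * chebT (n + 1) s) - chebT n s := by
    funext s; rw [chebT]; ring
  rw [hrec, leftFracIntegral_sub hα (by fun_prop) (by fun_prop), leftFracIntegral_const_mul,
    leftFracIntegral_id_mul hα hax (by fun_prop)]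
  ring

lemma mul_leftFracIntegral_add_one_chebT (hα : 0 < α) (hax : a ≤ x) (n : ℕ) :
    2 * (n + 2) * n * leftFracIntegral a (α + 1) (chebT (n + 1)) x
      = n * leftFracIntegral a α (chebT (n + 2)) x - (n + 2) * leftFracIntegral a α (chebT n) x
        - (n * chebT (n + 2) a - (n + 2) * chebT n a) * (x - a) ^ α / Real.Gamma (α + 1) := by
  rw [← leftFracIntegral_const_mul, leftFracIntegral_add_one_of_hasDerivAt hα hax
      (fun s _ => hasDerivAt_mul_chebT_add_two_sub_mul_chebT n s) (by fun_prop),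
    leftFracIntegral_sub hα (by fun_prop) (by fun_prop),
    leftFracIntegral_const_mul, leftFracIntegral_const_mul]

end ChebyshevFracIntegral

/-- Recurrence for the left fractional integrals of the Chebyshev polynomials, `j ≥ 2`. -/
theorem chebyshev_left_frac_integral_rec (α : ℝ) (hα : 0 < α) (j : ℕ) (hj : 2 ≤ j)
    (x : ℝ) (hx : x ∈ Set.Ioc (-1 : ℝ) 1) :
    (1 / Real.Gamma α) * ∫ s in (-1 : ℝ)..x, (x - s) ^ (α - 1) * chebT (j + 1) s
      = (2 * ((j : ℝ) + 1) * x / ((j : ℝ) + 1 + α)) *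
          ((1 / Real.Gamma α) * ∫ s in (-1 : ℝ)..x, (x - s) ^ (α - 1) * chebT j s)
        - (((j : ℝ) + 1) * ((j : ℝ) - 1 - α) / (((j : ℝ) + 1 + α) * ((j : ℝ) - 1))) *
          ((1 / Real.Gamma α) * ∫ s in (-1 : ℝ)..x, (x - s) ^ (α - 1) * chebT (j - 1) s)
        + 2 * (-1 : ℝ) ^ j * α * (x + 1) ^ α /
            (Real.Gamma (α + 1) * ((j : ℝ) + 1 + α) * ((j : ℝ) - 1)) := by
  obtain ⟨n, rfl⟩ : ∃ n, j = n + 2 := ⟨j - 2, by omega⟩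
  have hax : (-1 : ℝ) ≤ x := hx.1.le
  have hrec := leftFracIntegral_chebT_add_two hα hax (n + 1)
  have hibp := mul_leftFracIntegral_add_one_chebT hα hax (n + 1)
  simp only [chebT_neg_one, sub_neg_eq_add] at hibp
  have hΓ : Real.Gamma (α + 1) ≠ 0 := (Real.Gamma_pos_of_pos (by linarith)).ne'
  have hn : (n : ℝ) + 2 - 1 ≠ 0 := by linarith [(n.cast_nonneg : (0 : ℝ) ≤ n)]
  change leftFracIntegral (-1) α (chebT (n + 1 + 2)) x
    = _ * leftFracIntegral (-1) α (chebT (n + 1 + 1)) x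
      - _ * leftFracIntegral (-1) α (chebT (n + 1)) x + _
  push_cast at hrec hibp ⊢
  field_simp at hibp ⊢
  linear_combination ((n : ℝ) + 3) * (n + 1) * Real.Gamma (α + 1) * hrec - α * hibp
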